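/- For 1/4 < β < 1/3, let D₈(β) be the octagon with vertices v₁ = (β, -2), v₂ = (1+β, -2), v₃ = (1-β, 0), v₄ = (β, 1), v₅ = -v₁, ..., v₈ = -v₄. Then D₈(β) + ℤ² is a five-fold lattice tiling of ℝ². -/

import Mathlib

/-- `K + X` is a `k`-fold tiling of the plane. -/
def IsKFoldTiling (K X : Set (ℝ × ℝ)) (k : ℕ) : Prop :=
  (∀ y : ℝ × ℝ, ∃ S : Finset (ℝ × ℝ), ↑S ⊆ {x ∈ X | y - x ∈ K} ∧ k ≤ S.card) ∧
  (∀ y : ℝ × ℝ, ∀ S : Finset (ℝ × ℝ), ↑S ⊆ {x ∈ X | y - x ∈ interior K} → S.card ≤ k)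

/-- The integer lattice `ℤ²` inside `ℝ²`. -/
def intLattice : Set (ℝ × ℝ) := {p | ∃ m n : ℤ, p = ((m : ℝ), (n : ℝ))}

/-- The octagon `D₈(β)` with vertices `(β,-2), (1+β,-2), (1-β,0), (β,1)`
and their negatives. -/
noncomputable def D₈β (β : ℝ) : Set (ℝ × ℝ) :=
  convexHull ℝ {(β, -(2:ℝ)), (1 + β, -(2:ℝ)), (1 - β, (0:ℝ)), (β, (1:ℝ)),
    (-β, (2:ℝ)), (-1 - β, (2:ℝ)), (β - 1, (0:ℝ)), (-β, -(1:ℝ))}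

/-!
The octagon `D₈(β)` is cut out by `|y| ≤ 2`, `|x + β y| ≤ 1 - β`, `|x + (1 - 2β) y| ≤ 1 - β` and
`|x + 2β y| ≤ 3β`. Fix a point `(u, v)` and let `t = fract v`. A translate `D₈(β) + (m, n)`
contains `(u, v)` iff `u - m` lies in the horizontal chord of `D₈(β)` at height `v - n`. The only
chords that meet the interior are those at heights `t, t - 1, t + 1, t - 2`, and after integer
shifts `0, 1, 3, 3` they abut and tile a segment of length `5`. So the translates containing
`(u, v)` are indexed by the integers `j` with `u - j` in that segment: each of the five of them
yields a translate of the closed octagon, and every translate whose interior contains `(u, v)`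
arises in this way.
-/

open Set

lemma convex_setOf_abs_le {E : Type*} [AddCommGroup E] [Module ℝ E] (f : E →ₗ[ℝ] ℝ) (c : ℝ) :
    Convex ℝ {p | |f p| ≤ c} := by
  simpa [preimage, abs_le] using (convex_Icc (-c) c).linear_preimage f

lemma ContinuousLinearMap.abs_lt_of_mem_interior {E : Type*} [NormedAddCommGroup E]
    [NormedSpace ℝ E] [CompleteSpace E] {f : E →L[ℝ] ℝ} (hf : Function.Surjective f) {K : Set E}
    {c : ℝ} (hK : ∀ q ∈ K, |f q| ≤ c) {p : E} (hp : p ∈ interior K) : |f p| < c := by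
  have : p ∈ interior (f ⁻¹' Icc (-c) c) := interior_mono (fun q hq => abs_le.mp (hK q hq)) hp
  rw [f.interior_preimage hf, interior_Icc] at this
  exact abs_lt.mpr this

lemma Convex.mk_mem_of_le {F : Type*} [AddCommGroup F] [Module ℝ F] {s : Set (ℝ × F)}
    (hs : Convex ℝ s) {l r x : ℝ} {t : F} (hl : (l, t) ∈ s) (hr : (r, t) ∈ s) (hlx : l ≤ x)
    (hxr : x ≤ r) : (x, t) ∈ s := by
  have hrow : Convex ℝ {x | (x, t) ∈ s} := by
    simpa [preimage, AffineMap.lineMap_apply_module, ← add_smul] using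
      hs.affine_preimage (AffineMap.lineMap (0, t) (1, t))
  exact hrow.ordConnected.out hl hr ⟨hlx, hxr⟩

lemma Int.mem_Ioc_floor_sub_iff {α : Type*} [Ring α] [LinearOrder α] [IsStrictOrderedRing α]
    [FloorRing α] {x : α} {n j : ℤ} :
    j ∈ Finset.Ioc (⌊x⌋ - n) ⌊x⌋ ↔ (j : α) ≤ x ∧ x < j + n := by
  rw [Finset.mem_Ioc, sub_lt_iff_lt_add, Int.floor_lt, Int.le_floor]
  push_cast
  exact and_comm

lemma isKFoldTiling_of_finset_between {K X : Set (ℝ × ℝ)} {k : ℕ}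
    (h : ∀ y, ∃ T : Finset (ℝ × ℝ), T.card = k ∧ {x ∈ X | y - x ∈ interior K} ⊆ ↑T ∧
      ↑T ⊆ {x ∈ X | y - x ∈ K}) :
    IsKFoldTiling K X k := by
  refine ⟨fun y => ?_, fun y S hS => ?_⟩
  · obtain ⟨T, hT, -, hTK⟩ := h y
    exact ⟨T, hTK, hT.ge⟩
  · obtain ⟨T, hT, hKT, -⟩ := h y
    exact hT ▸ Finset.card_le_card (Finset.coe_subset.1 (hS.trans hKT))

def shear (c : ℝ) : ℝ × ℝ →L[ℝ] ℝ := .fst ℝ ℝ ℝ + c • .snd ℝ ℝ ℝ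

@[simp] lemma shear_apply (c : ℝ) (p : ℝ × ℝ) : shear c p = p.1 + c * p.2 := rfl

lemma shear_surjective (c : ℝ) : Function.Surjective (shear c) :=
  fun r => ⟨(r, 0), by simp⟩

namespace D₈β

variable {β : ℝ}

lemma neg_mem_iff {p : ℝ × ℝ} : -p ∈ D₈β β ↔ p ∈ D₈β β := by
  unfold D₈β
  rw [← mem_neg, ← convexHull_neg]
  congr! 2
  ext ⟨x, y⟩
  simp only [mem_neg, mem_insert_iff, mem_singleton_iff, Prod.neg_mk, Prod.mk.injEq,
    neg_eq_iff_eq_neg]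
  constructor <;> rintro (h|h|h|h|h|h|h|h) <;> simp only [h] <;> ring_nf <;> simp

lemma mem_iff (h₀ : 1/4 ≤ β) (h₁ : β ≤ 1/3) {p : ℝ × ℝ} :
    p ∈ D₈β β ↔ |p.2| ≤ 2 ∧ |p.1 + β * p.2| ≤ 1 - β ∧ |p.1 + (1 - 2*β) * p.2| ≤ 1 - β ∧
      |p.1 + 2*β * p.2| ≤ 3*β := by
  constructor
  · have hconv : Convex ℝ {p : ℝ × ℝ | |p.2| ≤ 2 ∧ |p.1 + β * p.2| ≤ 1 - β ∧
        |p.1 + (1 - 2*β) * p.2| ≤ 1 - β ∧ |p.1 + 2*β * p.2| ≤ 3*β} :=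
      (convex_setOf_abs_le (LinearMap.snd ℝ ℝ ℝ) 2).inter <|
        (convex_setOf_abs_le (shear β).toLinearMap _).inter <|
        (convex_setOf_abs_le (shear (1 - 2*β)).toLinearMap _).inter <|
        convex_setOf_abs_le (shear (2*β)).toLinearMap _
    refine fun hp => convexHull_min ?_ hconv hp
    simp only [insert_subset_iff, singleton_subset_iff, mem_ofPred_eq, abs_le]
    refine ⟨?_, ?_, ?_, ?_, ?_, ?_, ?_, ?_⟩ <;>
      refine ⟨⟨?_, ?_⟩, ⟨?_, ?_⟩, ⟨?_, ?_⟩, ⟨?_, ?_⟩⟩ <;> linarith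
  · intro hp
    wlog hs : 0 ≤ p.2 generalizing p
    · rw [← neg_mem_iff]
      refine this ?_ (by simp only [Prod.snd_neg]; linarith)
      simpa only [Prod.fst_neg, Prod.snd_neg, abs_neg, ← neg_add, mul_neg] using hp
    obtain ⟨x, s⟩ := p
    obtain ⟨hs₂, hl, hr₁, hr₂⟩ := hp
    rw [abs_le] at hs₂ hl hr₁ hr₂
    dsimp only at hs hs₂ hl hr₁ hr₂ ⊢
    have edge {A B : ℝ × ℝ} (hA : A ∈ D₈β β) (hB : B ∈ D₈β β) {c : ℝ} (hc₀ : 0 ≤ c)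
        (hc₁ : c ≤ 1) : AffineMap.lineMap A B c ∈ D₈β β :=
      (convex_convexHull ℝ _).lineMap_mem hA hB ⟨hc₀, hc₁⟩
    have v₃ : (1 - β, (0 : ℝ)) ∈ D₈β β := subset_convexHull ℝ _ (by simp)
    have v₄ : (β, (1 : ℝ)) ∈ D₈β β := subset_convexHull ℝ _ (by simp)
    have v₅ : (-β, (2 : ℝ)) ∈ D₈β β := subset_convexHull ℝ _ (by simp)
    have v₆ : (-1 - β, (2 : ℝ)) ∈ D₈β β := subset_convexHull ℝ _ (by simp)
    have v₇ : (β - 1, (0 : ℝ)) ∈ D₈β β := subset_convexHull ℝ _ (by simp)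
    have hleft : (β - 1 - β * s, s) ∈ D₈β β := by
      convert edge v₇ v₆ (c := s / 2) (by linarith) (by linarith) using 1
      ext <;> simp [AffineMap.lineMap_apply_module]
      ring
    rcases le_total s 1 with hs₁ | hs₁
    · have hright : (1 - β + (2*β - 1) * s, s) ∈ D₈β β := by
        convert edge v₃ v₄ hs hs₁ using 1
        ext <;> simp [AffineMap.lineMap_apply_module]
        ring
      exact (convex_convexHull ℝ _).mk_mem_of_le hleft hright (by linarith) (by linarith)
    · have hright : (3*β - 2*β * s, s) ∈ D₈β β := by
        convert edge v₄ v₅ (c := s - 1) (by linarith) (by linarith) using 1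
        ext <;> simp [AffineMap.lineMap_apply_module] <;> ring
      exact (convex_convexHull ℝ _).mk_mem_of_le hleft hright (by linarith) (by linarith)

lemma abs_lt_of_mem_interior (h₀ : 1/4 ≤ β) (h₁ : β ≤ 1/3) {p : ℝ × ℝ}
    (hp : p ∈ interior (D₈β β)) :
    |p.2| < 2 ∧ |p.1 + β * p.2| < 1 - β ∧ |p.1 + (1 - 2*β) * p.2| < 1 - β ∧
      |p.1 + 2*β * p.2| < 3*β := by
  have h q (hq : q ∈ D₈β β) := (mem_iff h₀ h₁).1 hq
  exact ⟨(ContinuousLinearMap.snd ℝ ℝ ℝ).abs_lt_of_mem_interior Prod.snd_surjective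
      (fun q hq => (h q hq).1) hp,
    (shear _).abs_lt_of_mem_interior (shear_surjective _) (fun q hq => (h q hq).2.1) hp,
    (shear _).abs_lt_of_mem_interior (shear_surjective _) (fun q hq => (h q hq).2.2.1) hp,
    (shear _).abs_lt_of_mem_interior (shear_surjective _) (fun q hq => (h q hq).2.2.2) hp⟩

/-- For `0 ≤ t < 1`, lay the chords of `D₈(β)` at heights `t, t - 1, t + 1, t - 2`, shifted right by
`0, 1, 3, 3`, end to end on `[β - 1 - β t, β + 4 - β t]`; the thresholds are the right ends of the
first three. `unroll β t x` is the pair (shift, row offset) of the chord containing `x`. -/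
noncomputable def unroll (β t x : ℝ) : ℤ × ℤ :=
  if x ≤ 1 - β + (2*β - 1) * t then (0, 0)
  else if x ≤ 2 - β * t then (1, 1)
  else if x ≤ 3 + β - 2*β * t then (3, -1)
  else (3, 2)

section Unroll

variable {t x : ℝ}

lemma unroll_eq_of_snd_eq {x' : ℝ} (h : (unroll β t x).2 = (unroll β t x').2) :
    unroll β t x = unroll β t x' := by
  unfold unroll at *
  split_ifs at * <;> simp_all

lemma sub_unroll_mem (h₀ : 1/4 ≤ β) (h₁ : β ≤ 1/3) (ht₀ : 0 ≤ t) (ht₁ : t ≤ 1)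
    (hx₀ : β - 1 - β * t ≤ x) (hx₁ : x ≤ β + 4 - β * t) :
    (x - (unroll β t x).1, t - (unroll β t x).2) ∈ D₈β β := by
  have hβt : 0 ≤ β * t := by positivity
  rw [mem_iff h₀ h₁]
  unfold unroll
  split_ifs <;> simp only [abs_le] <;> push_cast <;>
    refine ⟨⟨?_, ?_⟩, ⟨?_, ?_⟩, ⟨?_, ?_⟩, ⟨?_, ?_⟩⟩ <;> nlinarith

lemma exists_unroll_eq (h₀ : 1/4 ≤ β) (h₁ : β ≤ 1/3) (ht₀ : 0 ≤ t) (ht₁ : t < 1) {d : ℤ}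
    (hx : (x, t - d) ∈ interior (D₈β β)) :
    ∃ s : ℤ, β - 1 - β * t < x + s ∧ x + s < β + 4 - β * t ∧ unroll β t (x + s) = (s, d) := by
  obtain ⟨hy, hℓ₁, hℓ₂, hℓ₃⟩ := abs_lt_of_mem_interior h₀ h₁ hx
  dsimp only at hy hℓ₁ hℓ₂ hℓ₃
  rw [abs_lt] at hy hℓ₁ hℓ₂ hℓ₃
  have hd₀ : -2 < d := by exact_mod_cast (show (-2 : ℝ) < d by linarith)
  have hd₁ : d < 3 := by exact_mod_cast (show (d : ℝ) < 3 by linarith)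
  have hβt : 0 ≤ β * t := by positivity
  unfold unroll
  interval_cases d <;> [refine ⟨3, ?_⟩; refine ⟨0, ?_⟩; refine ⟨1, ?_⟩; refine ⟨3, ?_⟩] <;>
    push_cast at * <;> refine ⟨by linarith, by linarith, ?_⟩ <;>
    split_ifs <;> first | rfl | (exfalso; linarith)

end Unroll

noncomputable def unrollLattice (β : ℝ) (y : ℝ × ℝ) (j : ℤ) : ℤ × ℤ :=
  (j, ⌊y.2⌋) + unroll β (Int.fract y.2) (y.1 - j)

variable (y : ℝ × ℝ)

lemma unrollLattice_injective : Function.Injective (unrollLattice β y) := fun j j' h => by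
  have hsnd := congrArg Prod.snd h
  simp only [unrollLattice, Prod.snd_add, add_right_inj] at hsnd
  have hfst := congrArg Prod.fst h
  simp only [unrollLattice, Prod.fst_add, unroll_eq_of_snd_eq hsnd, add_left_inj] at hfst
  exact hfst

lemma sub_unrollLattice_mem (h₀ : 1/4 ≤ β) (h₁ : β ≤ 1/3) {j : ℤ}
    (hj₀ : β - 1 - β * Int.fract y.2 ≤ y.1 - j) (hj₁ : y.1 - j ≤ β + 4 - β * Int.fract y.2) :
    y - Prod.map (↑) (↑) (unrollLattice β y j) ∈ D₈β β := by
  convert sub_unroll_mem h₀ h₁ (Int.fract_nonneg y.2) (Int.fract_lt_one y.2).le hj₀ hj₁ using 1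
  ext
  · simp [unrollLattice]
    ring
  · simp [unrollLattice]
    linarith [Int.floor_add_fract y.2]

lemma exists_unrollLattice_eq (h₀ : 1/4 ≤ β) (h₁ : β ≤ 1/3) {m n : ℤ}
    (h : y - ((m : ℝ), (n : ℝ)) ∈ interior (D₈β β)) :
    ∃ j : ℤ, β - 1 - β * Int.fract y.2 < y.1 - j ∧ y.1 - j < β + 4 - β * Int.fract y.2 ∧
      unrollLattice β y j = (m, n) := by
  have hrow : y.2 - n = Int.fract y.2 - ((n - ⌊y.2⌋ : ℤ) : ℝ) := by
    push_cast
    rw [Int.fract]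
    ring
  rw [Prod.mk_sub_mk, hrow] at h
  obtain ⟨s, hs₀, hs₁, hus⟩ :=
    exists_unroll_eq h₀ h₁ (Int.fract_nonneg y.2) (Int.fract_lt_one y.2) h
  have hj : y.1 - ((m - s : ℤ) : ℝ) = y.1 - m + s := by push_cast; ring
  refine ⟨m - s, by rwa [hj], by rwa [hj], ?_⟩
  simp only [unrollLattice, hj, hus]
  ext <;> simp

lemma exists_finset_between (h₀ : 1/4 ≤ β) (h₁ : β ≤ 1/3) :
    ∃ T : Finset (ℝ × ℝ), T.card = 5 ∧ {x ∈ intLattice | y - x ∈ interior (D₈β β)} ⊆ ↑T ∧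
      ↑T ⊆ {x ∈ intLattice | y - x ∈ D₈β β} := by
  set a := y.1 - (β - 1 - β * Int.fract y.2) with ha
  refine ⟨(Finset.Ioc (⌊a⌋ - 5) ⌊a⌋).image (Prod.map (↑) (↑) ∘ unrollLattice β y), ?_, ?_, ?_⟩
  · rw [Finset.card_image_of_injective _
      ((Int.cast_injective.prodMap Int.cast_injective).comp (unrollLattice_injective y)),
      Int.card_Ioc]
    simp
  · rintro _ ⟨⟨m, n, rfl⟩, hint⟩
    obtain ⟨j, hj₀, hj₁, hj⟩ := exists_unrollLattice_eq y h₀ h₁ hint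
    refine Finset.mem_image.2
      ⟨j, Int.mem_Ioc_floor_sub_iff.2 ⟨by linarith, by push_cast; linarith⟩, ?_⟩
    simp [hj]
  · intro z hz
    obtain ⟨j, hj, rfl⟩ := Finset.mem_image.1 hz
    obtain ⟨hj₀, hj₁⟩ := Int.mem_Ioc_floor_sub_iff.1 hj
    push_cast at hj₁
    exact ⟨⟨_, _, rfl⟩, sub_unrollLattice_mem y h₀ h₁ (by linarith) (by linarith)⟩

end D₈β

/-- For `1/4 < β < 1/3`, `D₈(β) + ℤ²` is a five-fold lattice tiling of the plane. -/
theorem D₈β_fivefold_lattice_tiling (β : ℝ) (h0 : 1/4 < β) (h1 : β < 1/3) :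
    IsKFoldTiling (D₈β β) intLattice 5 :=
  isKFoldTiling_of_finset_between fun y => D₈β.exists_finset_between y h0.le h1.le
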